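/- (Subcriticality yields a critical offspring distribution with exponential moments; Lemma 4.1 of the paper.) Suppose ρ_R > τ, where τ := Σ_{n≥1} A_n ρ_A^n. Then ρ_A ∈ (0, ∞), τ ∈ (0, ∞), R(τ) ∈ (0, ∞), ρ_A = τ / R(τ), and the sequence p_k := r_k τ^k / (R(τ) · k!) (k ∈ ℕ₀) is a probability distribution on ℕ₀ with mean one, i.e. Σ_{k≥0} k p_k = 1, and there exists ε > 0 such that Σ_{k≥0} p_k (1 + ε)^k < ∞. -/

import Mathlib

/-!
Write `f x = ∑ Aₙ xⁿ` and `R s = ∑ cₖ sᵏ` with `cₖ = rₖ / k!`. Wherever `f` converges, the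
formal identity `A = X · R(A)` becomes `f x = x R(f x)`; conversely, if `x R(s) ≤ s` then every
partial sum of `f` at `x` is at most `s`, so `f` converges at `x`.

The identity gives `c₀ x ≤ f x` and `c_j x (f x)^(j-1) ≤ 1`. With `j ≥ 2` this bounds `ρ_A` and
also `f` on `(ρ_A / 2, ρ_A)`, so `f` converges at `ρ_A` and `τ = ρ_A R(τ)`. The converse, applied
to `x = s / R(s)`, shows `s / R(s) ≤ ρ_A = τ / R(τ)` for every `s < ρ_R`: `τ` is an interior
maximum of `s / R(s)`, so `R(τ) = τ R'(τ)`, which says that `p` has mean one. Since `R` still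
converges a little beyond `τ`, `p` has an exponential moment.
-/

open scoped ENNReal

/-- The radius of convergence (in `[0,∞]`) of the power series with real
coefficients `a 0, a 1, a 2, …`. -/
noncomputable def radiusOfCoeff (a : ℕ → ℝ) : ℝ≥0∞ :=
  ⨆ (r : NNReal) (_ : Summable fun n => a n * (r : ℝ) ^ n), (r : ℝ≥0∞)

open Finset PowerSeries

section RadiusOfCoeff

variable {a : ℕ → ℝ}

theorem summable_mul_pow_of_le (ha : ∀ n, 0 ≤ a n) {x y : ℝ} (hx : 0 ≤ x) (hxy : x ≤ y)
    (h : Summable fun n => a n * y ^ n) : Summable fun n => a n * x ^ n :=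
  h.of_nonneg_of_le (fun n => mul_nonneg (ha n) (pow_nonneg hx n))
    fun n => mul_le_mul_of_nonneg_left (pow_le_pow_left₀ hx hxy n) (ha n)

theorem tsum_mul_pow_pos (ha : ∀ n, 0 ≤ a n) (ha0 : 0 < a 0) {s : ℝ} (hs : 0 ≤ s)
    (h : Summable fun n => a n * s ^ n) : 0 < ∑' n, a n * s ^ n :=
  ha0.trans_le (by simpa using h.le_tsum 0 fun n _ => mul_nonneg (ha n) (pow_nonneg hs n))

theorem ofReal_le_radiusOfCoeff {x : ℝ} (hx : 0 ≤ x) (h : Summable fun n => a n * x ^ n) :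
    ENNReal.ofReal x ≤ radiusOfCoeff a :=
  le_iSup₂_of_le (⟨x, hx⟩ : NNReal) h ENNReal.ofReal_coe_nnreal.le

theorem radiusOfCoeff_le_ofReal {B : ℝ}
    (h : ∀ x : ℝ, 0 ≤ x → (Summable fun n => a n * x ^ n) → x ≤ B) :
    radiusOfCoeff a ≤ ENNReal.ofReal B :=
  iSup₂_le fun s hs => by
    simpa only [ENNReal.ofReal_coe_nnreal] using ENNReal.ofReal_le_ofReal (h s s.2 hs)

theorem exists_gt_summable_of_ofReal_lt_radiusOfCoeff {t : ℝ} (ht : 0 ≤ t)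
    (h : ENNReal.ofReal t < radiusOfCoeff a) : ∃ s, t < s ∧ Summable fun n => a n * s ^ n := by
  obtain ⟨s, hs⟩ := lt_iSup_iff.mp h
  obtain ⟨hsum, hts⟩ := lt_iSup_iff.mp hs
  exact ⟨s, (ENNReal.ofReal_lt_coe_iff ht).mp hts, hsum⟩

theorem summable_of_ofReal_lt_radiusOfCoeff (ha : ∀ n, 0 ≤ a n) {x : ℝ} (hx : 0 ≤ x)
    (h : ENNReal.ofReal x < radiusOfCoeff a) : Summable fun n => a n * x ^ n := by
  obtain ⟨s, hxs, hs⟩ := exists_gt_summable_of_ofReal_lt_radiusOfCoeff hx h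
  exact summable_mul_pow_of_le ha hx hxs.le hs

theorem summable_mul_pow_of_forall_lt_tsum_le (ha : ∀ n, 0 ≤ a n) {x₀ ρ M : ℝ} (hx₀ : 0 ≤ x₀)
    (hx₀ρ : x₀ < ρ)
    (h : ∀ x ∈ Set.Ioo x₀ ρ, (Summable fun n => a n * x ^ n) ∧ ∑' n, a n * x ^ n ≤ M) :
    Summable fun n => a n * ρ ^ n := by
  refine summable_of_sum_range_le (c := M)
    (fun n => mul_nonneg (ha n) (pow_nonneg (hx₀.trans hx₀ρ.le) n)) fun N => ?_
  have hcont : Continuous fun x : ℝ => ∑ n ∈ range N, a n * x ^ n := by fun_prop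
  refine le_of_tendsto (hcont.tendsto ρ |>.mono_left (nhdsWithin_le_nhds (s := Set.Iio ρ))) ?_
  filter_upwards [Ioo_mem_nhdsLT hx₀ρ] with x hx
  exact ((h x hx).1.sum_le_tsum _ fun n _ =>
    mul_nonneg (ha n) (pow_nonneg (hx₀.trans hx.1.le) n)).trans (h x hx).2

end RadiusOfCoeff

theorem PowerSeries.coeff_pow_eq_zero_of_lt {R : Type*} [CommSemiring R] {A : R⟦X⟧}
    (hA0 : constantCoeff A = 0) {n k : ℕ} (h : n < k) : coeff n (A ^ k) = 0 :=
  X_pow_dvd_iff.mp (pow_dvd_pow_of_dvd (X_dvd_iff.mpr hA0) k) n h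

theorem PowerSeries.coeff_pow_nonneg {R : Type*} [CommSemiring R] [PartialOrder R]
    [IsOrderedRing R] {A : R⟦X⟧} (hA : ∀ n, 0 ≤ coeff n A) (k n : ℕ) :
    0 ≤ coeff n (A ^ k) := by
  induction k generalizing n with
  | zero => rw [pow_zero, coeff_one]; split_ifs <;> simp
  | succ k ih =>
    rw [pow_succ, coeff_mul]
    exact sum_nonneg fun p _ => mul_nonneg (ih p.1) (hA p.2)

theorem Polynomial.sum_range_coeff_mul_pow_le_eval {q : Polynomial ℝ} (hq : ∀ n, 0 ≤ q.coeff n)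
    {x : ℝ} (hx : 0 ≤ x) (N : ℕ) : ∑ n ∈ range N, q.coeff n * x ^ n ≤ q.eval x := by
  rw [q.eval_eq_sum_range' (lt_max_of_lt_right (Nat.lt_succ_self q.natDegree) : _ < max N _)]
  exact sum_le_sum_of_subset_of_nonneg (range_subset_range.mpr (le_max_left _ _))
    fun n _ _ => mul_nonneg (hq n) (pow_nonneg hx n)

section Evaluation

variable {A : PowerSeries ℝ}

theorem sum_range_coeff_pow_mul_pow_le (hA : ∀ n, 0 ≤ coeff n A) {x : ℝ} (hx : 0 ≤ x)
    (N k : ℕ) :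
    ∑ n ∈ range N, coeff n (A ^ k) * x ^ n ≤ (∑ n ∈ range N, coeff n A * x ^ n) ^ k := by
  set T := trunc N A
  have hT : ∀ n, 0 ≤ coeff n (T : PowerSeries ℝ) := fun n => by
    rw [Polynomial.coeff_coe, coeff_trunc]; split_ifs <;> simp [hA]
  have hTk : ∀ n < N, coeff n (A ^ k) = (T ^ k).coeff n := fun n hn => by
    have h := congrArg (Polynomial.coeff · n) (trunc_trunc_pow A N k)
    simpa only [coeff_trunc, if_pos hn, ← Polynomial.coe_pow, Polynomial.coeff_coe] using h.symm
  calc ∑ n ∈ range N, coeff n (A ^ k) * x ^ n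
      = ∑ n ∈ range N, (T ^ k).coeff n * x ^ n :=
        sum_congr rfl fun n hn => by rw [hTk n (mem_range.mp hn)]
    _ ≤ (T ^ k).eval x := Polynomial.sum_range_coeff_mul_pow_le_eval
        (fun n => by simpa [← Polynomial.coe_pow] using coeff_pow_nonneg hT k n) hx N
    _ = (∑ n ∈ range N, coeff n A * x ^ n) ^ k := by
        rw [Polynomial.eval_pow, Polynomial.eval, eval₂_trunc_eq_sum_range]; rfl

theorem hasSum_coeff_pow_mul_pow {x S : ℝ}
    (hS : HasSum (fun n => coeff n A * x ^ n) S) (k : ℕ) :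
    HasSum (fun n => coeff n (A ^ k) * x ^ n) (S ^ k) := by
  induction k with
  | zero =>
    convert hasSum_ite_eq 0 (1 : ℝ) using 1
    · funext n
      split_ifs with hn <;> simp [coeff_one, hn]
    · simp
  | succ k ih =>
    have hf : Summable fun n => ‖coeff n (A ^ k) * x ^ n‖ := by
      simpa only [Real.norm_eq_abs] using ih.summable.abs
    have hg : Summable fun n => ‖coeff n A * x ^ n‖ := by
      simpa only [Real.norm_eq_abs] using hS.summable.abs
    have hcauchy : ∀ n, coeff n (A ^ (k + 1)) * x ^ n = ∑ p ∈ antidiagonal n,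
        coeff p.1 (A ^ k) * x ^ p.1 * (coeff p.2 A * x ^ p.2) := fun n => by
      rw [pow_succ, coeff_mul, sum_mul]
      refine sum_congr rfl fun p hp => ?_
      rw [← mem_antidiagonal.mp hp, pow_add]
      ring
    simp_rw [hcauchy]
    rw [pow_succ, ← ih.tsum_eq, ← hS.tsum_eq,
      tsum_mul_tsum_eq_tsum_sum_antidiagonal_of_summable_norm hf hg]
    exact (summable_norm_sum_mul_antidiagonal_of_summable_norm hf hg).of_norm.hasSum

end Evaluation

section FunctionalEquation

variable {c : ℕ → ℝ} {A : PowerSeries ℝ}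

theorem coeff_succ_eq_sum_range (hA0 : constantCoeff A = 0)
    (hAeq : ∀ n, coeff (n + 1) A = ∑' k, c k * coeff n (A ^ k)) {n N : ℕ} (hn : n < N) :
    coeff (n + 1) A = ∑ k ∈ range N, c k * coeff n (A ^ k) := by
  rw [hAeq n]
  exact tsum_eq_sum fun k hk => by
    rw [coeff_pow_eq_zero_of_lt hA0 (by simp at hk; omega), mul_zero]

theorem hasSum_mul_pow_tsum_coeff_mul_pow (hc : ∀ k, 0 ≤ c k) (hA0 : constantCoeff A = 0)
    (hAeq : ∀ n, coeff (n + 1) A = ∑' k, c k * coeff n (A ^ k)) (hA : ∀ n, 0 ≤ coeff n A)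
    {x : ℝ} (hx : 0 < x) (hsum : Summable fun n => coeff n A * x ^ n) :
    HasSum (fun k => c k * (∑' n, coeff n A * x ^ n) ^ k) ((∑' n, coeff n A * x ^ n) / x) := by
  set S := ∑' n, coeff n A * x ^ n
  -- `F (n, k)` is the share of `c k • A ^ k` in the term `Aₙ₊₁ xⁿ⁺¹` of `f x`
  set F : ℕ × ℕ → ℝ := fun p => x * (c p.2 * (coeff p.1 (A ^ p.2) * x ^ p.1))
  have hF : 0 ≤ F := fun p =>
    mul_nonneg hx.le (mul_nonneg (hc _) (mul_nonneg (coeff_pow_nonneg hA _ _) (by positivity)))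
  have hrow : ∀ n, HasSum (fun k => F (n, k)) (coeff (n + 1) A * x ^ (n + 1)) := fun n => by
    rw [coeff_succ_eq_sum_range hA0 hAeq (Nat.lt_succ_self n), sum_mul]
    have hfin : HasSum (fun k => F (n, k)) (∑ k ∈ range (n + 1), F (n, k)) :=
      hasSum_sum_of_ne_finset_zero fun k hk => by
        simp [F, coeff_pow_eq_zero_of_lt hA0 (by simpa using hk : n < k)]
    convert hfin using 1
    exact sum_congr rfl fun k _ => by simp only [F]; ring
  have hrows : HasSum (fun n => coeff (n + 1) A * x ^ (n + 1)) S := by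
    have h := hsum.hasSum
    rw [← hasSum_nat_add_iff' 1] at h
    simpa [coeff_zero_eq_constantCoeff, hA0] using h
  have hcol : ∀ k, HasSum (fun n => F (n, k)) (x * (c k * S ^ k)) := fun k =>
    ((hasSum_coeff_pow_mul_pow hsum.hasSum k).mul_left (c k)).mul_left x
  have hFsum : Summable F := (summable_prod_of_nonneg hF).mpr
    ⟨fun n => (hrow n).summable, hrows.summable.congr fun n => (hrow n).tsum_eq.symm⟩
  have hcols : HasSum (fun k => x * (c k * S ^ k)) S := by
    refine ((hFsum.prod_symm.prod.congr fun k => (hcol k).tsum_eq).hasSum_iff).mpr ?_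
    symm
    calc S = ∑' n, ∑' k, F (n, k) := by rw [tsum_congr fun n => (hrow n).tsum_eq, hrows.tsum_eq]
      _ = ∑' k, ∑' n, F (n, k) := (hFsum.tsum_comm (f := fun n k => F (n, k))).symm
      _ = ∑' k, x * (c k * S ^ k) := tsum_congr fun k => (hcol k).tsum_eq
  exact (hasSum_mul_left_iff hx.ne').mp (by rwa [mul_div_cancel₀ S hx.ne'])

theorem sum_range_coeff_mul_pow_le_of_mul_tsum_le (hc : ∀ k, 0 ≤ c k) (hA0 : constantCoeff A = 0)
    (hAeq : ∀ n, coeff (n + 1) A = ∑' k, c k * coeff n (A ^ k)) (hA : ∀ n, 0 ≤ coeff n A)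
    {s x : ℝ} (hs : 0 ≤ s) (hx : 0 ≤ x) (hR : Summable fun k => c k * s ^ k)
    (hxs : x * ∑' k, c k * s ^ k ≤ s) (N : ℕ) :
    ∑ n ∈ range N, coeff n A * x ^ n ≤ s := by
  induction N with
  | zero => simpa using hs
  | succ N ih =>
    have hP : 0 ≤ ∑ n ∈ range N, coeff n A * x ^ n :=
      sum_nonneg fun n _ => mul_nonneg (hA n) (pow_nonneg hx n)
    calc ∑ n ∈ range (N + 1), coeff n A * x ^ n
        = x * ∑ k ∈ range N, c k * ∑ n ∈ range N, coeff n (A ^ k) * x ^ n := by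
          rw [sum_range_succ', coeff_zero_eq_constantCoeff, hA0, zero_mul, add_zero]
          simp_rw [mul_sum]
          rw [sum_comm]
          refine sum_congr rfl fun n hn => ?_
          rw [coeff_succ_eq_sum_range hA0 hAeq (mem_range.mp hn), sum_mul]
          exact sum_congr rfl fun k _ => by ring
      _ ≤ x * ∑ k ∈ range N, c k * s ^ k := by
          gcongr with k
          · exact hc k
          exact (sum_range_coeff_pow_mul_pow_le hA hx N k).trans (pow_le_pow_left₀ hP ih k)
      _ ≤ x * ∑' k, c k * s ^ k := by
          gcongr
          exact hR.sum_le_tsum _ fun k _ => mul_nonneg (hc k) (pow_nonneg hs k)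
      _ ≤ s := hxs

theorem ofReal_div_tsum_le_radiusOfCoeff (hc : ∀ k, 0 ≤ c k) (hc0 : 0 < c 0)
    (hA0 : constantCoeff A = 0) (hAeq : ∀ n, coeff (n + 1) A = ∑' k, c k * coeff n (A ^ k))
    (hA : ∀ n, 0 ≤ coeff n A) {s : ℝ} (hs : 0 ≤ s) (hR : Summable fun k => c k * s ^ k) :
    ENNReal.ofReal (s / ∑' k, c k * s ^ k) ≤ radiusOfCoeff fun n => coeff n A := by
  have hRpos := tsum_mul_pow_pos hc hc0 hs hR
  have hx : 0 ≤ s / ∑' k, c k * s ^ k := div_nonneg hs hRpos.le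
  refine ofReal_le_radiusOfCoeff hx (summable_of_sum_range_le
    (fun n => mul_nonneg (hA n) (pow_nonneg hx n))
    (sum_range_coeff_mul_pow_le_of_mul_tsum_le hc hA0 hAeq hA hs hx hR ?_))
  rw [div_mul_cancel₀ _ hRpos.ne']

theorem radiusOfCoeff_coeff_pos (hc : ∀ k, 0 ≤ c k) (hc0 : 0 < c 0)
    (hA0 : constantCoeff A = 0) (hAeq : ∀ n, coeff (n + 1) A = ∑' k, c k * coeff n (A ^ k))
    (hA : ∀ n, 0 ≤ coeff n A) (hR : 0 < radiusOfCoeff c) :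
    0 < radiusOfCoeff fun n => coeff n A := by
  obtain ⟨s, hs, hsum⟩ := exists_gt_summable_of_ofReal_lt_radiusOfCoeff le_rfl (by simpa using hR)
  exact (ENNReal.ofReal_pos.mpr (div_pos hs (tsum_mul_pow_pos hc hc0 hs.le hsum))).trans_le
    (ofReal_div_tsum_le_radiusOfCoeff hc hc0 hA0 hAeq hA hs.le hsum)

theorem coeff_zero_mul_le_tsum_coeff_mul_pow (hc : ∀ k, 0 ≤ c k) (hA0 : constantCoeff A = 0)
    (hAeq : ∀ n, coeff (n + 1) A = ∑' k, c k * coeff n (A ^ k)) (hA : ∀ n, 0 ≤ coeff n A)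
    {x : ℝ} (hx : 0 < x) (hsum : Summable fun n => coeff n A * x ^ n) :
    c 0 * x ≤ ∑' n, coeff n A * x ^ n := by
  have hS := hasSum_mul_pow_tsum_coeff_mul_pow hc hA0 hAeq hA hx hsum
  have hS0 : 0 ≤ ∑' n, coeff n A * x ^ n :=
    tsum_nonneg fun n => mul_nonneg (hA n) (pow_nonneg hx.le n)
  have := le_hasSum hS 0 fun k _ => mul_nonneg (hc k) (pow_nonneg hS0 k)
  rwa [pow_zero, mul_one, le_div_iff₀ hx] at this

theorem mul_mul_tsum_coeff_mul_pow_pow_le_one (hc : ∀ k, 0 ≤ c k) (hc0 : 0 < c 0)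
    (hA0 : constantCoeff A = 0) (hAeq : ∀ n, coeff (n + 1) A = ∑' k, c k * coeff n (A ^ k))
    (hA : ∀ n, 0 ≤ coeff n A) {x : ℝ} (hx : 0 < x)
    (hsum : Summable fun n => coeff n A * x ^ n) (j : ℕ) :
    c (j + 1) * x * (∑' n, coeff n A * x ^ n) ^ j ≤ 1 := by
  set S := ∑' n, coeff n A * x ^ n
  have hSpos : 0 < S :=
    (mul_pos hc0 hx).trans_le (coeff_zero_mul_le_tsum_coeff_mul_pow hc hA0 hAeq hA hx hsum)
  have h := le_hasSum (hasSum_mul_pow_tsum_coeff_mul_pow hc hA0 hAeq hA hx hsum) (j + 1)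
    fun k _ => mul_nonneg (hc k) (pow_nonneg hSpos.le k)
  rw [le_div_iff₀ hx] at h
  refine le_of_mul_le_mul_right ?_ hSpos
  calc c (j + 1) * x * S ^ j * S = c (j + 1) * S ^ (j + 1) * x := by ring
    _ ≤ 1 * S := by rwa [one_mul]

theorem radiusOfCoeff_coeff_lt_top (hc : ∀ k, 0 ≤ c k) (hc0 : 0 < c 0)
    (hA0 : constantCoeff A = 0) (hAeq : ∀ n, coeff (n + 1) A = ∑' k, c k * coeff n (A ^ k))
    (hA : ∀ n, 0 ≤ coeff n A) {j : ℕ} (hcj : 0 < c (j + 1)) :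
    radiusOfCoeff (fun n => coeff n A) < ⊤ := by
  refine (radiusOfCoeff_le_ofReal (B := max 1 (1 / (c (j + 1) * c 0 ^ j)))
    fun x _ hsum => ?_).trans_lt ENNReal.ofReal_lt_top
  rcases le_or_gt x 1 with hx1 | hx1
  · exact le_max_of_le_left hx1
  have hx : 0 < x := one_pos.trans hx1
  have hbound : c (j + 1) * c 0 ^ j * x ^ (j + 1) ≤ 1 := calc
    c (j + 1) * c 0 ^ j * x ^ (j + 1) = c (j + 1) * x * (c 0 * x) ^ j := by ring
    _ ≤ c (j + 1) * x * (∑' n, coeff n A * x ^ n) ^ j := by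
      gcongr
      exact coeff_zero_mul_le_tsum_coeff_mul_pow hc hA0 hAeq hA hx hsum
    _ ≤ 1 := mul_mul_tsum_coeff_mul_pow_pow_le_one hc hc0 hA0 hAeq hA hx hsum j
  refine le_max_of_le_right ((le_self_pow₀ hx1.le j.succ_ne_zero).trans ?_)
  rwa [le_div_iff₀' (by positivity)]

theorem summable_coeff_mul_radiusOfCoeff_pow (hc : ∀ k, 0 ≤ c k) (hc0 : 0 < c 0)
    (hA0 : constantCoeff A = 0) (hAeq : ∀ n, coeff (n + 1) A = ∑' k, c k * coeff n (A ^ k))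
    (hA : ∀ n, 0 ≤ coeff n A) {j : ℕ} (hcj : 0 < c (j + 2))
    (hρ0 : 0 < radiusOfCoeff fun n => coeff n A) (hρ : radiusOfCoeff (fun n => coeff n A) < ⊤) :
    Summable fun n => coeff n A * (radiusOfCoeff fun m => coeff m A).toReal ^ n := by
  set ρ := (radiusOfCoeff fun m => coeff m A).toReal
  have hρpos : 0 < ρ := ENNReal.toReal_pos hρ0.ne' hρ.ne
  refine summable_mul_pow_of_forall_lt_tsum_le hA (half_pos hρpos).le (half_lt_self hρpos)
    (M := max 1 (2 / (c (j + 2) * ρ))) fun x hx => ?_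
  have hxpos : 0 < x := (half_pos hρpos).trans hx.1
  have hsum : Summable fun n => coeff n A * x ^ n := summable_of_ofReal_lt_radiusOfCoeff hA
    hxpos.le ((ENNReal.ofReal_lt_iff_lt_toReal hxpos.le hρ.ne).mpr hx.2)
  refine ⟨hsum, ?_⟩
  set S := ∑' n, coeff n A * x ^ n
  rcases le_or_gt S 1 with hS1 | hS1
  · exact le_max_of_le_left hS1
  have h := mul_mul_tsum_coeff_mul_pow_pow_le_one hc hc0 hA0 hAeq hA hxpos hsum (j + 1)
  refine le_max_of_le_right ?_
  calc S ≤ S ^ (j + 1) := le_self_pow₀ hS1.le j.succ_ne_zero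
    _ ≤ 1 / (c (j + 2) * x) := by
      rw [le_div_iff₀ (by positivity)]
      linarith
    _ ≤ 2 / (c (j + 2) * ρ) := by
      rw [div_le_div_iff₀ (by positivity) (by positivity)]
      nlinarith [hx.1]

end FunctionalEquation

section Criticality

variable {c : ℕ → ℝ}

theorem mul_mul_nat_mul_pow_pred (a y : ℝ) (k : ℕ) :
    y * (a * (k * y ^ (k - 1))) = k * (a * y ^ k) := by
  rcases k with _ | k
  · simp
  · rw [Nat.add_sub_cancel, pow_succ]
    ring

theorem summable_nat_mul_mul_pow (hc : ∀ k, 0 ≤ c k) {y b : ℝ} (hy : 0 ≤ y) (hyb : y < b)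
    (hb : Summable fun k => c k * b ^ k) : Summable fun k => k * (c k * y ^ k) := by
  have hb0 : 0 < b := hy.trans_lt hyb
  have hq : ‖y / b‖ < 1 := by
    rw [Real.norm_of_nonneg (div_nonneg hy hb0.le), div_lt_one hb0]
    exact hyb
  have hgeom := summable_pow_mul_geometric_of_norm_lt_one 1 hq
  refine (hb.mul_right (∑' k : ℕ, (k : ℝ) ^ 1 * (y / b) ^ k)).of_nonneg_of_le
    (fun k => by have := hc k; positivity) fun k => ?_
  calc (k : ℝ) * (c k * y ^ k) = c k * b ^ k * ((k : ℝ) ^ 1 * (y / b) ^ k) := by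
        rw [div_pow]
        field_simp
    _ ≤ c k * b ^ k * ∑' k : ℕ, (k : ℝ) ^ 1 * (y / b) ^ k := by
        gcongr
        · have := hc k; positivity
        exact hgeom.le_tsum k fun i _ => by positivity

theorem hasDerivAt_tsum_mul_pow (hc : ∀ k, 0 ≤ c k) {τ b : ℝ} (hτ : 0 ≤ τ) (hτb : τ < b)
    (hb : Summable fun k => c k * b ^ k) :
    HasDerivAt (fun s => ∑' k, c k * s ^ k) (∑' k, c k * (k * τ ^ (k - 1))) τ := by
  set b' := (τ + b) / 2
  have hb' : 0 < b' := by simp only [b']; linarith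
  have hu : Summable fun k => c k * (k * b' ^ (k - 1)) :=
    (summable_mul_left_iff hb'.ne').mp <|
      (summable_nat_mul_mul_pow hc hb'.le (by simp only [b']; linarith) hb).congr fun k =>
        (mul_mul_nat_mul_pow_pred _ _ _).symm
  have hτ' : τ ∈ Set.Ioo (-b') b' := ⟨by linarith, by simp only [b']; linarith⟩
  refine hasDerivAt_tsum_of_isPreconnected hu isOpen_Ioo isPreconnected_Ioo
    (fun k y _ => (hasDerivAt_pow k y).const_mul (c k)) (fun k y hy => ?_) hτ'
    (summable_mul_pow_of_le hc hτ hτb.le hb) hτ'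
  rw [norm_mul, norm_mul, Real.norm_of_nonneg (hc k), norm_pow, Real.norm_natCast]
  have := hc k
  gcongr
  exact abs_le.mpr ⟨hy.1.le, hy.2.le⟩

theorem tsum_nat_mul_mul_pow_eq_of_forall_div_tsum_le (hc : ∀ k, 0 ≤ c k) {τ b : ℝ}
    (hτ : 0 < τ) (hτb : τ < b) (hb : Summable fun k => c k * b ^ k)
    (hR : 0 < ∑' k, c k * τ ^ k)
    (hmax : ∀ s ∈ Set.Ioo 0 b, s / ∑' k, c k * s ^ k ≤ τ / ∑' k, c k * τ ^ k) :
    ∑' k, k * (c k * τ ^ k) = ∑' k, c k * τ ^ k := by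
  have hψ := (hasDerivAt_id' τ).div (hasDerivAt_tsum_mul_pow hc hτ.le hτb hb) hR.ne'
  have hmaxloc : IsLocalMax (fun s => s / ∑' k, c k * s ^ k) τ :=
    Filter.eventually_of_mem (Ioo_mem_nhds hτ hτb) hmax
  have hcrit := hmaxloc.hasDerivAt_eq_zero hψ
  rw [div_eq_zero_iff, sub_eq_zero, one_mul] at hcrit
  rw [hcrit.resolve_right (pow_ne_zero 2 hR.ne'), ← tsum_mul_left]
  exact tsum_congr fun k => (mul_mul_nat_mul_pow_pred _ _ _).symm

theorem offspring_distribution_of_tsum_nat_mul_eq (hc : ∀ k, 0 ≤ c k) {τ b : ℝ}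
    (hτ : 0 < τ) (hτb : τ < b) (hb : Summable fun k => c k * b ^ k)
    (hR : 0 < ∑' k, c k * τ ^ k) (hmean : ∑' k, k * (c k * τ ^ k) = ∑' k, c k * τ ^ k) :
    (∀ k, 0 ≤ c k * τ ^ k / ∑' j, c j * τ ^ j) ∧
    Summable (fun k => c k * τ ^ k / ∑' j, c j * τ ^ j) ∧
    ∑' k, c k * τ ^ k / ∑' j, c j * τ ^ j = 1 ∧
    Summable (fun k : ℕ => (k : ℝ) * (c k * τ ^ k / ∑' j, c j * τ ^ j)) ∧
    ∑' k : ℕ, (k : ℝ) * (c k * τ ^ k / ∑' j, c j * τ ^ j) = 1 ∧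
    ∃ ε : ℝ, 0 < ε ∧ Summable fun k => c k * τ ^ k / (∑' j, c j * τ ^ j) * (1 + ε) ^ k := by
  set R := ∑' j, c j * τ ^ j
  have hmoment := summable_nat_mul_mul_pow hc hτ.le hτb hb
  simp_rw [← mul_div_assoc]
  refine ⟨fun k => div_nonneg (mul_nonneg (hc k) (pow_nonneg hτ.le k)) hR.le,
    (summable_mul_pow_of_le hc hτ.le hτb.le hb).div_const R, ?_, hmoment.div_const R, ?_,
    b / τ - 1, by rw [sub_pos, one_lt_div hτ]; exact hτb, ?_⟩
  · rw [tsum_div_const, div_self hR.ne']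
  · rw [tsum_div_const, hmean, div_self hR.ne']
  · refine (hb.div_const R).congr fun k => ?_
    rw [add_sub_cancel, div_pow]
    field_simp

end Criticality

/-- **Subcriticality yields a critical offspring distribution with exponential moments.**
Let `(r k)` be nonnegative reals with `r 0 > 0` and `r k > 0` for some `k ≥ 2`, set
`R(x) = ∑ (r k / k!) x^k` with radius of convergence `ρ_R ∈ (0,∞]`, and let `A` be the
nonnegative formal power series with zero constant term satisfying `A = x·R(A)`, with
radius of convergence `ρ_A` and `τ := ∑ A_n ρ_A^n`.  If `ρ_R > τ`, then
`ρ_A ∈ (0,∞)`, `τ ∈ (0,∞)`, `R(τ) ∈ (0,∞)`, `ρ_A = τ / R(τ)`, and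
`p k := r k τ^k / (R(τ)·k!)` is a probability distribution on ℕ with mean one and with
`∑ p k (1+ε)^k < ∞` for some `ε > 0`. -/
theorem subcritical_enriched_trees_offspring_distribution
    (r : ℕ → ℝ) (hr : ∀ k, 0 ≤ r k) (hr0 : 0 < r 0) (hr2 : ∃ k, 2 ≤ k ∧ 0 < r k)
    (hρR : 0 < radiusOfCoeff (fun k => r k / (Nat.factorial k : ℝ)))
    (A : PowerSeries ℝ) (hA0 : PowerSeries.constantCoeff A = 0)
    (hAeq : ∀ n : ℕ, PowerSeries.coeff (n + 1) A =
      ∑' k : ℕ, r k / (Nat.factorial k : ℝ) * PowerSeries.coeff n (A ^ k))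
    (hAnn : ∀ n : ℕ, 0 ≤ PowerSeries.coeff n A)
    (τ : ℝ)
    (hτdef : τ = ∑' n : ℕ, PowerSeries.coeff n A *
      (radiusOfCoeff fun m => PowerSeries.coeff m A).toReal ^ n)
    (hsub : ENNReal.ofReal τ < radiusOfCoeff (fun k => r k / (Nat.factorial k : ℝ))) :
    0 < radiusOfCoeff (fun m => PowerSeries.coeff m A) ∧
    radiusOfCoeff (fun m => PowerSeries.coeff m A) < ⊤ ∧
    Summable (fun n : ℕ => PowerSeries.coeff n A *
      (radiusOfCoeff fun m => PowerSeries.coeff m A).toReal ^ n) ∧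
    0 < τ ∧
    Summable (fun k : ℕ => r k / (Nat.factorial k : ℝ) * τ ^ k) ∧
    0 < (∑' k : ℕ, r k / (Nat.factorial k : ℝ) * τ ^ k) ∧
    (radiusOfCoeff fun m => PowerSeries.coeff m A).toReal =
      τ / (∑' k : ℕ, r k / (Nat.factorial k : ℝ) * τ ^ k) ∧
    (∀ k : ℕ, 0 ≤ r k * τ ^ k /
      ((∑' j : ℕ, r j / (Nat.factorial j : ℝ) * τ ^ j) * (Nat.factorial k : ℝ))) ∧
    Summable (fun k : ℕ => r k * τ ^ k /
      ((∑' j : ℕ, r j / (Nat.factorial j : ℝ) * τ ^ j) * (Nat.factorial k : ℝ))) ∧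
    (∑' k : ℕ, r k * τ ^ k /
      ((∑' j : ℕ, r j / (Nat.factorial j : ℝ) * τ ^ j) * (Nat.factorial k : ℝ))) = 1 ∧
    Summable (fun k : ℕ => (k : ℝ) * (r k * τ ^ k /
      ((∑' j : ℕ, r j / (Nat.factorial j : ℝ) * τ ^ j) * (Nat.factorial k : ℝ)))) ∧
    (∑' k : ℕ, (k : ℝ) * (r k * τ ^ k /
      ((∑' j : ℕ, r j / (Nat.factorial j : ℝ) * τ ^ j) * (Nat.factorial k : ℝ)))) = 1 ∧
    ∃ ε : ℝ, 0 < ε ∧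
      Summable (fun k : ℕ => (r k * τ ^ k /
        ((∑' j : ℕ, r j / (Nat.factorial j : ℝ) * τ ^ j) * (Nat.factorial k : ℝ))) *
          (1 + ε) ^ k) := by
  obtain ⟨j, hj, hrj⟩ := hr2
  obtain ⟨j, rfl⟩ := Nat.exists_eq_add_of_le' hj
  set c : ℕ → ℝ := fun k => r k / (Nat.factorial k : ℝ)
  have hc : ∀ k, 0 ≤ c k := fun k => div_nonneg (hr k) (Nat.cast_nonneg _)
  have hc0 : 0 < c 0 := by simpa [c] using hr0
  have hcj : 0 < c (j + 2) := div_pos hrj (by positivity)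
  have hρ0 := radiusOfCoeff_coeff_pos hc hc0 hA0 hAeq hAnn hρR
  have hρ := radiusOfCoeff_coeff_lt_top (j := j + 1) hc hc0 hA0 hAeq hAnn hcj
  have hsumρ := summable_coeff_mul_radiusOfCoeff_pow hc hc0 hA0 hAeq hAnn hcj hρ0 hρ
  set ρ := (radiusOfCoeff fun m => PowerSeries.coeff m A).toReal
  have hρpos : 0 < ρ := ENNReal.toReal_pos hρ0.ne' hρ.ne
  have hτ0 : 0 ≤ τ := hτdef ▸ tsum_nonneg fun n => mul_nonneg (hAnn n) (pow_nonneg hρpos.le n)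
  have hRτ : HasSum (fun k => c k * τ ^ k) (τ / ρ) :=
    hτdef ▸ hasSum_mul_pow_tsum_coeff_mul_pow hc hA0 hAeq hAnn hρpos hsumρ
  have hRpos := tsum_mul_pow_pos hc hc0 hτ0 hRτ.summable
  have hτpos : 0 < τ := (div_pos_iff_of_pos_right hρpos).mp (hRτ.tsum_eq ▸ hRpos)
  have hρeq : ρ = τ / ∑' k, c k * τ ^ k := by
    rw [hRτ.tsum_eq, div_div_cancel₀ hτpos.ne']
  obtain ⟨b, hτb, hb⟩ := exists_gt_summable_of_ofReal_lt_radiusOfCoeff hτ0 hsub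
  have hmean := tsum_nat_mul_mul_pow_eq_of_forall_div_tsum_le hc hτpos hτb hb hRpos fun s hs =>
    hρeq ▸ (ENNReal.ofReal_le_iff_le_toReal hρ.ne).mp (ofReal_div_tsum_le_radiusOfCoeff hc hc0
      hA0 hAeq hAnn hs.1.le (summable_mul_pow_of_le hc hs.1.le hs.2.le hb))
  refine ⟨hρ0, hρ, hsumρ, hτpos, hRτ.summable, hRpos, hρeq, ?_⟩
  have hp : ∀ k, r k * τ ^ k / ((∑' j, r j / (Nat.factorial j : ℝ) * τ ^ j) *
      (Nat.factorial k : ℝ)) = c k * τ ^ k / ∑' j, c j * τ ^ j := fun k => by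
    simp only [c]
    ring
  simp only [hp]
  exact offspring_distribution_of_tsum_nat_mul_eq hc hτpos hτb hb hRpos hmean
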